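/- Let (Z_i)_{i≥1} be independent identically distributed standard Gaussian random variables on a probability space, and let M_n := max{Z_1, …, Z_n}. Define a_n := 1/√(2 log n) and b_n := √(2 log n) − (log log n + log(4π))/(2√(2 log n)). Then for every x ∈ ℝ, P((M_n − b_n)/a_n ≤ x) converges to exp(−e^{−x}) as n → ∞; that is, the rescaled maximum of n independent standard Gaussians converges in distribution to a Gumbel random variable. -/

import Mathlib

open MeasureTheory Filter ProbabilityTheory

noncomputable section

/-- The centering constant `b_n = √(2 log n) − (log log n + log 4π)/(2√(2 log n))`. -/
def gumbelCenter (n : ℕ) : ℝ :=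
  Real.sqrt (2 * Real.log n) -
    (Real.log (Real.log n) + Real.log (4 * Real.pi)) / (2 * Real.sqrt (2 * Real.log n))

/-- The scaling constant `a_n = 1/√(2 log n)`. -/
def gumbelScale (n : ℕ) : ℝ := 1 / Real.sqrt (2 * Real.log n)

/-!
For i.i.d. `Zᵢ` with law `μ`, `P(Mₙ ≤ u) = μ(-∞, u]ⁿ`, and `(1 - pₙ)ⁿ → e^{-τ}` whenever
`n pₙ → τ`; so it suffices that `n P(Z > uₙ) → e^{-x}` for the thresholds `uₙ = bₙ + aₙ x`.
Mills' ratio `P(Z > u) ~ φ(u) / u`, which comes from `(-φ(t) / t)' = (1 + t⁻²) φ(t)`, turns this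
into `n φ(uₙ) / uₙ → e^{-x}`. Writing `uₙ = √(2 log n) + dₙ`, the constants are tuned so that
`n φ(uₙ) = e^{-x} e^{-dₙ²/2} √(2 log n)` exactly, and `dₙ → 0`.
-/

open Real Set Asymptotics Topology

section IidMaxima

variable {Ω ι : Type*} [MeasurableSpace Ω] {P : Measure Ω} {X : ι → Ω → ℝ} {μ : Measure ℝ}

lemma measure_iSup_le_eq_pow [Fintype ι] [Nonempty ι] (hindep : iIndepFun X P)
    (hlaw : ∀ i, HasLaw (X i) μ P) (u : ℝ) :
    P {ω | ⨆ i, X i ω ≤ u} = μ (Iic u) ^ Fintype.card ι := by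
  have hset : {ω | ⨆ i, X i ω ≤ u} = ⋂ i, X i ⁻¹' Iic u := by
    ext ω
    simp [ciSup_le_iff (Set.finite_range _).bddAbove]
  rw [hset, hindep.meas_iInter fun i ↦ ⟨Iic u, measurableSet_Iic, rfl⟩]
  have hpreimage : ∀ i, P (X i ⁻¹' Iic u) = μ (Iic u) := fun i ↦
    (hlaw i).measure_eq (p := (· ≤ u)) measurableSet_Iic
  simp only [hpreimage, Finset.prod_const, Finset.card_univ]

lemma tendsto_measureReal_Iic_pow_of_tendsto [IsProbabilityMeasure μ] {u : ℕ → ℝ} {τ : ℝ}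
    (h : Tendsto (fun n : ℕ ↦ n * μ.real (Ioi (u n))) atTop (𝓝 τ)) :
    Tendsto (fun n ↦ μ.real (Iic (u n)) ^ n) atTop (𝓝 (exp (-τ))) := by
  have h' : Tendsto (fun n : ℕ ↦ n * -μ.real (Ioi (u n))) atTop (𝓝 (-τ)) := by
    simpa only [mul_neg] using h.neg
  refine (tendsto_one_add_pow_exp_of_tendsto h').congr fun n ↦ ?_
  rw [← compl_Ioi, measureReal_compl measurableSet_Ioi, probReal_univ, sub_eq_add_neg]

end IidMaxima

section GaussianTail

lemma gaussianPDFReal_zero_one (t : ℝ) :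
    gaussianPDFReal 0 1 t = (√(2 * π))⁻¹ * exp (-(t ^ 2 / 2)) := by
  simp [gaussianPDFReal, neg_div]

lemma hasDerivAt_gaussianPDFReal_zero_one (t : ℝ) :
    HasDerivAt (gaussianPDFReal 0 1) (-t * gaussianPDFReal 0 1 t) t := by
  have h : HasDerivAt (fun s : ℝ ↦ -(s ^ 2 / 2)) (-t) t := by
    refine ((hasDerivAt_pow 2 t).div_const 2).neg.congr_deriv ?_
    norm_num
  have h' := h.exp.const_mul (√(2 * π))⁻¹
  rw [← funext gaussianPDFReal_zero_one] at h'
  refine h'.congr_deriv ?_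
  rw [gaussianPDFReal_zero_one]
  ring

lemma tendsto_gaussianPDFReal_zero_one_atTop : Tendsto (gaussianPDFReal 0 1) atTop (𝓝 0) := by
  have h : Tendsto (fun t : ℝ ↦ -(t ^ 2 / 2)) atTop atBot :=
    tendsto_neg_atTop_atBot.comp ((tendsto_pow_atTop two_ne_zero).atTop_div_const two_pos)
  simpa [funext gaussianPDFReal_zero_one] using (tendsto_exp_atBot.comp h).const_mul (√(2 * π))⁻¹

lemma hasDerivAt_neg_gaussianPDFReal_div {t : ℝ} (ht : t ≠ 0) :
    HasDerivAt (fun s ↦ -gaussianPDFReal 0 1 s / s)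
      ((1 + 1 / t ^ 2) * gaussianPDFReal 0 1 t) t := by
  refine ((hasDerivAt_gaussianPDFReal_zero_one t).neg.div (hasDerivAt_id t) ht).congr_deriv ?_
  simp only [id, Pi.neg_apply]
  field_simp
  ring

lemma tendsto_neg_gaussianPDFReal_div_atTop :
    Tendsto (fun s ↦ -gaussianPDFReal 0 1 s / s) atTop (𝓝 0) := by
  simpa [div_eq_mul_inv] using
    tendsto_gaussianPDFReal_zero_one_atTop.neg.mul tendsto_inv_atTop_zero

lemma integrableOn_Ioi_one_add_inv_sq_mul_gaussianPDFReal {u : ℝ} (hu : 0 < u) :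
    IntegrableOn (fun t ↦ (1 + 1 / t ^ 2) * gaussianPDFReal 0 1 t) (Ioi u) :=
  integrableOn_Ioi_deriv_of_nonneg'
    (fun t ht ↦ hasDerivAt_neg_gaussianPDFReal_div (hu.trans_le ht).ne')
    (fun t _ ↦ mul_nonneg (by positivity) (gaussianPDFReal_nonneg 0 1 t))
    tendsto_neg_gaussianPDFReal_div_atTop

lemma integral_Ioi_one_add_inv_sq_mul_gaussianPDFReal {u : ℝ} (hu : 0 < u) :
    ∫ t in Ioi u, (1 + 1 / t ^ 2) * gaussianPDFReal 0 1 t = gaussianPDFReal 0 1 u / u := by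
  rw [integral_Ioi_of_hasDerivAt_of_nonneg'
    (fun t ht ↦ hasDerivAt_neg_gaussianPDFReal_div (hu.trans_le ht).ne')
    (fun t _ ↦ mul_nonneg (by positivity) (gaussianPDFReal_nonneg 0 1 t))
    tendsto_neg_gaussianPDFReal_div_atTop]
  ring

lemma gaussianReal_real_Ioi (u : ℝ) :
    (gaussianReal 0 1).real (Ioi u) = ∫ t in Ioi u, gaussianPDFReal 0 1 t := by
  rw [measureReal_def, gaussianReal_apply_eq_integral 0 one_ne_zero, ENNReal.toReal_ofReal
    (setIntegral_nonneg measurableSet_Ioi fun t _ ↦ gaussianPDFReal_nonneg 0 1 t)]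

lemma gaussianReal_real_Ioi_le {u : ℝ} (hu : 0 < u) :
    (gaussianReal 0 1).real (Ioi u) ≤ gaussianPDFReal 0 1 u / u := by
  rw [gaussianReal_real_Ioi, ← integral_Ioi_one_add_inv_sq_mul_gaussianPDFReal hu]
  refine setIntegral_mono_on (integrable_gaussianPDFReal 0 1).integrableOn
    (integrableOn_Ioi_one_add_inv_sq_mul_gaussianPDFReal hu) measurableSet_Ioi
    fun t _ ↦ le_mul_of_one_le_left (gaussianPDFReal_nonneg 0 1 t) ?_
  simp only [le_add_iff_nonneg_right]
  positivity

lemma le_gaussianReal_real_Ioi {u : ℝ} (hu : 0 < u) :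
    gaussianPDFReal 0 1 u / u ≤ (1 + 1 / u ^ 2) * (gaussianReal 0 1).real (Ioi u) := by
  rw [gaussianReal_real_Ioi, ← integral_Ioi_one_add_inv_sq_mul_gaussianPDFReal hu,
    ← integral_const_mul]
  refine setIntegral_mono_on (integrableOn_Ioi_one_add_inv_sq_mul_gaussianPDFReal hu)
    ((integrable_gaussianPDFReal 0 1).integrableOn.const_mul _)
    measurableSet_Ioi fun t ht ↦ mul_le_mul_of_nonneg_right ?_ (gaussianPDFReal_nonneg 0 1 t)
  gcongr
  exact ht.le

lemma gaussianReal_real_Ioi_isEquivalent :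
    (fun u ↦ (gaussianReal 0 1).real (Ioi u)) ~[atTop] fun u ↦ gaussianPDFReal 0 1 u / u := by
  refine isEquivalent_of_tendsto_one ?_
  have hlow : Tendsto (fun u : ℝ ↦ (1 + 1 / u ^ 2)⁻¹) atTop (𝓝 1) := by
    have h : Tendsto (fun u : ℝ ↦ 1 / u ^ 2) atTop (𝓝 0) := by
      simpa [one_div, Function.comp_def] using
        tendsto_inv_atTop_zero.comp (tendsto_pow_atTop two_ne_zero)
    simpa using (h.const_add 1).inv₀ (by norm_num)
  refine tendsto_of_tendsto_of_tendsto_of_le_of_le' hlow tendsto_const_nhds ?_ ?_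
  all_goals
    filter_upwards [eventually_gt_atTop 0] with u hu
    have hφ : 0 < gaussianPDFReal 0 1 u / u := div_pos (gaussianPDFReal_pos 0 1 u one_ne_zero) hu
  · rw [Pi.div_apply, inv_le_iff_one_le_mul₀ (by positivity), div_mul_eq_mul_div,
      le_div_iff₀ hφ, one_mul, mul_comm]
    exact le_gaussianReal_real_Ioi hu
  · rw [Pi.div_apply, div_le_one hφ]
    exact gaussianReal_real_Ioi_le hu

end GaussianTail

section GumbelThreshold

def gumbelThreshold (x : ℝ) (n : ℕ) : ℝ := gumbelCenter n + gumbelScale n * x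

def gumbelCorrection (x : ℝ) (n : ℕ) : ℝ :=
  (x - (log (log n) + log (4 * π)) / 2) / √(2 * log n)

lemma tendsto_log_natCast_atTop : Tendsto (fun n : ℕ ↦ log n) atTop atTop :=
  tendsto_log_atTop.comp tendsto_natCast_atTop_atTop

lemma tendsto_sqrt_two_mul_log_natCast_atTop : Tendsto (fun n : ℕ ↦ √(2 * log n)) atTop atTop :=
  tendsto_sqrt_atTop.comp (tendsto_log_natCast_atTop.const_mul_atTop two_pos)

lemma gumbelScale_pos {n : ℕ} (hn : 0 < log n) : 0 < gumbelScale n := by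
  unfold gumbelScale
  positivity

lemma gumbelThreshold_eq {n : ℕ} (hn : 0 < log n) (x : ℝ) :
    gumbelThreshold x n = √(2 * log n) + gumbelCorrection x n := by
  have hs : 0 < √(2 * log n) := by positivity
  unfold gumbelThreshold gumbelCenter gumbelScale gumbelCorrection
  field_simp
  ring

lemma tendsto_gumbelCorrection (x : ℝ) : Tendsto (gumbelCorrection x) atTop (𝓝 0) := by
  have hlog : Tendsto (fun y : ℝ ↦ log y / √y) atTop (𝓝 0) :=
    ((isLittleO_log_rpow_atTop one_half_pos).tendsto_div_nhds_zero).congr fun y ↦ by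
      rw [sqrt_eq_rpow]
  have h : Tendsto (fun y : ℝ ↦ ((x - log (4 * π) / 2) * (√y)⁻¹ - log y / √y / 2) / √2)
      atTop (𝓝 0) := by
    simpa using (((tendsto_inv_atTop_zero.comp tendsto_sqrt_atTop).const_mul
      (x - log (4 * π) / 2)).sub (hlog.div_const 2)).div_const √2
  refine (h.comp tendsto_log_natCast_atTop).congr' ?_
  filter_upwards [tendsto_log_natCast_atTop.eventually_gt_atTop 0] with n hn
  have hsqrt : √(2 * log n) = √2 * √(log n) := sqrt_mul zero_le_two _
  have hsqrt_pos : 0 < √(log n) := sqrt_pos.2 hn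
  simp only [Function.comp_apply, gumbelCorrection, hsqrt]
  field_simp
  ring

lemma tendsto_gumbelThreshold (x : ℝ) : Tendsto (gumbelThreshold x) atTop atTop := by
  refine (tendsto_sqrt_two_mul_log_natCast_atTop.atTop_add (tendsto_gumbelCorrection x)).congr' ?_
  filter_upwards [tendsto_log_natCast_atTop.eventually_gt_atTop 0] with n hn
  exact (gumbelThreshold_eq hn x).symm

lemma natCast_mul_gaussianPDFReal_gumbelThreshold {n : ℕ} (hn : 0 < log n) (x : ℝ) :
    n * gaussianPDFReal 0 1 (gumbelThreshold x n) =
      exp (-x) * exp (-(gumbelCorrection x n ^ 2 / 2)) * √(2 * log n) := by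
  set L := log n
  set s := √(2 * L)
  set d := gumbelCorrection x n
  set c := (log L + log (4 * π)) / 2
  have hs2 : s ^ 2 = 2 * L := sq_sqrt (by positivity)
  have hsd : s * d = x - c := mul_div_cancel₀ _ (by positivity)
  have hexpL : exp L = n := exp_log (zero_lt_one.trans ((log_pos_iff n.cast_nonneg).1 hn))
  have hexpc : exp c = s * √(2 * π) := by
    rw [← sqrt_mul (mul_pos two_pos hn).le, show 2 * L * (2 * π) = L * (4 * π) by ring,
      sqrt_eq_rpow, rpow_def_of_pos (mul_pos hn (by positivity)), log_mul hn.ne' (by positivity)]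
    congr 1
    ring
  have harg : -(gumbelThreshold x n ^ 2 / 2) = -L + (-x + (c + -(d ^ 2 / 2))) := by
    rw [gumbelThreshold_eq hn x]
    linear_combination (-1 / 2 : ℝ) * hs2 - hsd
  have hπ : 0 < √(2 * π) := by positivity
  have hn0 : (n : ℝ) ≠ 0 := by rw [← hexpL]; positivity
  rw [gaussianPDFReal_zero_one, harg, exp_add, exp_add, exp_add, hexpc, exp_neg L, hexpL]
  field_simp

lemma tendsto_natCast_mul_gaussianPDFReal_div_gumbelThreshold (x : ℝ) :
    Tendsto (fun n : ℕ ↦ n * (gaussianPDFReal 0 1 (gumbelThreshold x n) / gumbelThreshold x n))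
      atTop (𝓝 (exp (-x))) := by
  have hd := tendsto_gumbelCorrection x
  have hexp : Tendsto (fun n ↦ exp (-(gumbelCorrection x n ^ 2 / 2))) atTop (𝓝 1) := by
    have h0 : Tendsto (fun n ↦ -(gumbelCorrection x n ^ 2 / 2)) atTop (𝓝 0) := by
      simpa using ((hd.pow 2).div_const 2).neg
    simpa [Function.comp_def] using (continuous_exp.tendsto 0).comp h0
  have hratio : Tendsto (fun n ↦ (1 + gumbelCorrection x n / √(2 * log n))⁻¹) atTop (𝓝 1) := by
    have := hd.mul (tendsto_inv_atTop_zero.comp tendsto_sqrt_two_mul_log_natCast_atTop)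
    simpa [div_eq_mul_inv] using (this.const_add 1).inv₀ (by norm_num)
  have h := ((tendsto_const_nhds (x := exp (-x))).mul hexp).mul hratio
  rw [mul_one, mul_one] at h
  refine h.congr' ?_
  filter_upwards [tendsto_log_natCast_atTop.eventually_gt_atTop 0,
    (tendsto_gumbelThreshold x).eventually_gt_atTop 0] with n hn hu
  have hs : 0 < √(2 * log n) := by positivity
  rw [gumbelThreshold_eq hn] at hu
  rw [← mul_div_assoc, natCast_mul_gaussianPDFReal_gumbelThreshold hn, gumbelThreshold_eq hn]
  field_simp

lemma tendsto_natCast_mul_gaussianReal_Ioi_gumbelThreshold (x : ℝ) :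
    Tendsto (fun n : ℕ ↦ n * (gaussianReal 0 1).real (Ioi (gumbelThreshold x n))) atTop
      (𝓝 (exp (-x))) := by
  have h := (IsEquivalent.refl (u := fun n : ℕ ↦ (n : ℝ))).mul
    (gaussianReal_real_Ioi_isEquivalent.comp_tendsto (tendsto_gumbelThreshold x))
  exact h.symm.tendsto_nhds (tendsto_natCast_mul_gaussianPDFReal_div_gumbelThreshold x)

end GumbelThreshold

theorem gumbel_limit_of_iid_gaussian_maxima_general
    {Ω : Type*} [MeasurableSpace Ω] (P : Measure Ω)
    (Z : ℕ → Ω → ℝ)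
    (hindep : iIndepFun Z P)
    (hdist : ∀ i, P.map (Z i) = gaussianReal 0 1)
    (x : ℝ) :
    Tendsto
      (fun n : ℕ =>
        (P {ω | ((⨆ i : Fin n, Z (i.1 + 1) ω) - gumbelCenter n) / gumbelScale n ≤ x}).toReal)
      atTop (nhds (Real.exp (-Real.exp (-x)))) := by
  -- `Measure.map` sends a function that is not a.e.-measurable to `0`.
  have hlaw (i : ℕ) : HasLaw (Z i) (gaussianReal 0 1) P :=
    ⟨.of_map_ne_zero (by rw [hdist i]; exact IsProbabilityMeasure.ne_zero _), hdist i⟩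
  refine (tendsto_measureReal_Iic_pow_of_tendsto
    (tendsto_natCast_mul_gaussianReal_Ioi_gumbelThreshold x)).congr' ?_
  filter_upwards [eventually_gt_atTop 1] with n hn
  have hlog : 0 < log n := log_pos (by exact_mod_cast hn)
  have : Nonempty (Fin n) := ⟨⟨0, by omega⟩⟩
  have hset : {ω | ((⨆ i : Fin n, Z (i.1 + 1) ω) - gumbelCenter n) / gumbelScale n ≤ x} =
      {ω | ⨆ i : Fin n, Z (i.1 + 1) ω ≤ gumbelThreshold x n} := by
    ext ω
    rw [mem_ofPred_eq, div_le_iff₀ (gumbelScale_pos hlog), sub_le_iff_le_add', mul_comm]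
    rfl
  have hindep' : iIndepFun (fun i : Fin n ↦ Z (i.1 + 1)) P :=
    hindep.precomp ((add_left_injective 1).comp Fin.val_injective)
  rw [hset, measure_iSup_le_eq_pow hindep' (fun i ↦ hlaw _), Fintype.card_fin, ENNReal.toReal_pow,
    measureReal_def]

/-- **Gumbel limit for maxima of i.i.d. standard Gaussians.** If `(Z_i)` are independent
standard Gaussian random variables and `M_n = max{Z_1,…,Z_n}`, then for every `x ∈ ℝ`,
`P((M_n − b_n)/a_n ≤ x) → exp(−e^{−x})` as `n → ∞`. -/
theorem gumbel_limit_of_iid_gaussian_maxima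
    {Ω : Type*} [MeasurableSpace Ω] (P : Measure Ω) [IsProbabilityMeasure P]
    (Z : ℕ → Ω → ℝ)
    (hmeas : ∀ i, Measurable (Z i))
    (hindep : iIndepFun Z P)
    (hdist : ∀ i, P.map (Z i) = gaussianReal 0 1)
    (x : ℝ) :
    Tendsto
      (fun n : ℕ =>
        (P {ω | ((⨆ i : Fin n, Z (i.1 + 1) ω) - gumbelCenter n) / gumbelScale n ≤ x}).toReal)
      atTop (nhds (Real.exp (-Real.exp (-x)))) :=
  gumbel_limit_of_iid_gaussian_maxima_general P Z hindep hdist x
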